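/- Let P₁, N₁, P₂, N₂ be ℤ-indexed chain complexes of modules over a field k with N₁ and N₂ acyclic, and let F : P₁ ⊕ N₁ ⟶ P₂ ⊕ N₂ be a chain map between the biproduct complexes. If the composite Φ = (projection P₂ ⊕ N₂ ⟶ P₂) ∘ F ∘ (inclusion P₁ ⟶ P₁ ⊕ N₁) is a quasi-isomorphism, then F is a quasi-isomorphism. -/
import Mathlib

open CategoryTheory Limits

lemma isIso_homologyMap_aux {k : Type*} [Field k]
    (P N : ChainComplex (ModuleCat k) ℤ)
    (hN : ∀ n, IsZero (N.homology n)) (i : ℤ) :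
    IsIso (HomologicalComplex.homologyMap (biprod.inl : P ⟶ P ⊞ N) i) ∧
    IsIso (HomologicalComplex.homologyMap (biprod.fst : P ⊞ N ⟶ P) i) := by
  set H := HomologicalComplex.homologyFunctor (ModuleCat k) (ComplexShape.down ℤ) i with hH
  haveI : H.Additive := by rw [hH]; infer_instance
  haveI : H.PreservesZeroMorphisms := inferInstance
  haveI : PreservesBinaryBiproducts H :=
    preservesBinaryBiproducts_of_preservesBiproducts H
  haveI : PreservesBinaryBiproduct P N H := PreservesBinaryBiproducts.preserves
  have hz : IsZero (H.obj N) := hN i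
  have hinl : IsIso (biprod.inl : H.obj P ⟶ H.obj P ⊞ H.obj N) :=
    (Biprod.isIso_inl_iff_isZero _ _).2 hz
  have e1 : H.map (biprod.inl : P ⟶ P ⊞ N) =
      (biprod.inl : H.obj P ⟶ H.obj P ⊞ H.obj N) ≫ (H.mapBiprod P N).inv := by
    rw [Functor.mapBiprod_inv]; simp
  have e2 : H.map (biprod.fst : P ⊞ N ⟶ P) =
      (H.mapBiprod P N).hom ≫ (biprod.fst : H.obj P ⊞ H.obj N ⟶ H.obj P) := by
    rw [Functor.mapBiprod_hom]; simp
  have hfst : IsIso (biprod.fst : H.obj P ⊞ H.obj N ⟶ H.obj P) := by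
    have : (biprod.fst : H.obj P ⊞ H.obj N ⟶ H.obj P) =
        inv (biprod.inl : H.obj P ⟶ H.obj P ⊞ H.obj N) := by
      rw [IsIso.eq_inv_of_hom_inv_id biprod.inl_fst]
    rw [this]; infer_instance
  constructor
  · show IsIso (H.map _); rw [e1]; infer_instance
  · show IsIso (H.map _); rw [e2]; infer_instance

/-- Let `N₁`, `N₂` be acyclic chain complexes and `F : P₁ ⊞ N₁ ⟶ P₂ ⊞ N₂` a chain
map such that `Φ = biprod.inl ≫ F ≫ biprod.fst : P₁ ⟶ P₂` is a quasi-isomorphism.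
Then `F` is a quasi-isomorphism. -/
theorem quasiIso_of_biprod_component_quasiIso (k : Type*) [Field k]
    (P₁ N₁ P₂ N₂ : ChainComplex (ModuleCat k) ℤ)
    (hN₁ : ∀ n, IsZero (N₁.homology n)) (hN₂ : ∀ n, IsZero (N₂.homology n))
    (F : P₁ ⊞ N₁ ⟶ P₂ ⊞ N₂)
    (hΦ : QuasiIso ((biprod.inl : P₁ ⟶ P₁ ⊞ N₁) ≫ F ≫ (biprod.fst : P₂ ⊞ N₂ ⟶ P₂))) :
    QuasiIso F := by
  rw [quasiIso_iff]
  intro i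
  rw [quasiIsoAt_iff_isIso_homologyMap]
  have h1 := (isIso_homologyMap_aux P₁ N₁ hN₁ i).1
  have h2 := (isIso_homologyMap_aux P₂ N₂ hN₂ i).2
  have hphi : IsIso (HomologicalComplex.homologyMap
      ((biprod.inl : P₁ ⟶ P₁ ⊞ N₁) ≫ F ≫ (biprod.fst : P₂ ⊞ N₂ ⟶ P₂)) i) := by
    rw [← quasiIsoAt_iff_isIso_homologyMap]
    exact hΦ.1 i
  rw [HomologicalComplex.homologyMap_comp, HomologicalComplex.homologyMap_comp] at hphi
  have : IsIso (HomologicalComplex.homologyMap F i ≫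
      HomologicalComplex.homologyMap (biprod.fst : P₂ ⊞ N₂ ⟶ P₂) i) :=
    IsIso.of_isIso_comp_left (HomologicalComplex.homologyMap biprod.inl i) _
  exact IsIso.of_isIso_comp_right _ (HomologicalComplex.homologyMap (biprod.fst : P₂ ⊞ N₂ ⟶ P₂) i)
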